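/- Let ρ ∈ [0,ρ₀], let d* ∈ X be a minimizer of J(·,ρ) over X, and let u* be a dual-feasible point with D(u*,ρ) = J(d*,ρ) (strong duality). Then the complementarity measure vanishes: χ(d*,u*) = 0. -/

import Mathlib

/-
For any `d ∈ X`, testing the support functions in `D(u,ρ)` at `d` itself and at the projections
`d - tᵢ āⁱ ∈ Cᵢ` (with `tᵢ` the signed violation of constraint `i`), and bounding the quadratic
term by Fenchel–Young, gives the weak duality inequality with a gap: `D(u,ρ) ≤ J(d,ρ) - χ(d,u)`.
Here `χ(d,u) = Σᵢ ‖aⁱ‖ (|tᵢ| - ζᵢ tᵢ) ≥ 0` because `|ζᵢ| ≤ ‖uⁱ‖ ≤ 1`. Under strong duality at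
`d*` the gap must therefore vanish.
-/

open scoped RealInnerProductSpace
open Finset

noncomputable section

/-- `ℝⁿ` with the Euclidean norm. -/
abbrev Evec (n : ℕ) : Type := EuclideanSpace ℝ (Fin n)

variable {n m : ℕ}

/-- Apply a matrix to a Euclidean vector. -/
def matApply (M : Matrix (Fin n) (Fin n) ℝ) (x : Evec n) : Evec n := Matrix.toEuclideanLin M x

/-- ℓ2 operator norm of a matrix. -/
def opNorm (M : Matrix (Fin n) (Fin n) ℝ) : ℝ :=
  ‖(LinearMap.toContinuousLinearMap (Matrix.toEuclideanLin M))‖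

/-- `H_ρ := ρ H_f + H_0`. -/
def Hmat (Hf H0 : Matrix (Fin n) (Fin n) ℝ) (ρ : ℝ) : Matrix (Fin n) (Fin n) ℝ := ρ • Hf + H0

/-- `l(d,0) = Σ_{i≤m̄} |⟨aⁱ,d⟩+bᵢ| + Σ_{i>m̄} max(⟨aⁱ,d⟩+bᵢ,0)` (indices `i.val < mbar` are
the equality constraints). Note `lpen mbar a b 0 = J⁰`. -/
def lpen (mbar : ℕ) (a : Fin m → Evec n) (b : Fin m → ℝ) (d : Evec n) : ℝ :=
  ∑ i : Fin m, if (i : ℕ) < mbar then |⟪a i, d⟫ + b i| else max (⟪a i, d⟫ + b i) 0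

/-- `J(d,ρ) = ρ⟨g,d⟩ + ½⟨d,H_ρ d⟩ + l(d,0)`. -/
def Jval (mbar : ℕ) (g : Evec n) (a : Fin m → Evec n) (b : Fin m → ℝ)
    (Hf H0 : Matrix (Fin n) (Fin n) ℝ) (ρ : ℝ) (d : Evec n) : ℝ :=
  ρ * ⟪g, d⟫ + (1/2) * ⟪d, matApply (Hmat Hf H0 ρ) d⟫ + lpen mbar a b d

/-- `āⁱ := aⁱ/‖aⁱ‖`. -/
def abar (a : Fin m → Evec n) (i : Fin m) : Evec n := ‖a i‖⁻¹ • a i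

/-- `b̄ᵢ := bᵢ/‖aⁱ‖`. -/
def bbar (a : Fin m → Evec n) (b : Fin m → ℝ) (i : Fin m) : ℝ := b i / ‖a i‖

/-- `Cᵢ`: hyperplane for equality constraints, half-space for inequality constraints. -/
def Cset (mbar : ℕ) (a : Fin m → Evec n) (b : Fin m → ℝ) (i : Fin m) : Set (Evec n) :=
  if (i : ℕ) < mbar then {d | ⟪abar a i, d⟫ + bbar a b i = 0}
  else {d | ⟪abar a i, d⟫ + bbar a b i ≤ 0}

/-- Real-valued support function `δ*(y|C) = sup_{z∈C} ⟨y,z⟫` (via `sSup`). -/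
def suppFn (y : Evec n) (C : Set (Evec n)) : ℝ := sSup ((fun z => ⟪y, z⟫) '' C)

/-- Dual feasibility: `u⁰ + Σᵢ ‖aⁱ‖ uⁱ + u^{m+1} = 0` and `‖uⁱ‖ ≤ 1` for `i = 1,…,m`. -/
def DualFeasible (a : Fin m → Evec n) (u0 : Evec n) (u : Fin m → Evec n) (um1 : Evec n) : Prop :=
  (u0 + ∑ i, ‖a i‖ • u i + um1 = 0) ∧ ∀ i, ‖u i‖ ≤ 1

/-- Real-valued dual objective
`D(u,ρ) = -½⟨u⁰-ρg, H_ρ⁻¹(u⁰-ρg)⟩ - Σᵢ ‖aⁱ‖ δ*(uⁱ|Cᵢ) - δ*(u^{m+1}|X)`. -/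
def Dval (mbar : ℕ) (g : Evec n) (a : Fin m → Evec n) (b : Fin m → ℝ)
    (Hf H0 : Matrix (Fin n) (Fin n) ℝ) (X : Set (Evec n)) (ρ : ℝ)
    (u0 : Evec n) (u : Fin m → Evec n) (um1 : Evec n) : ℝ :=
  -(1/2) * ⟪u0 - ρ • g, matApply (Hmat Hf H0 ρ)⁻¹ (u0 - ρ • g)⟫
    - ∑ i, ‖a i‖ * suppFn (u i) (Cset mbar a b i)
    - suppFn um1 X

/-- Extended-real-valued support function. -/
def suppFnE (y : Evec n) (C : Set (Evec n)) : EReal :=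
  ⨆ z ∈ C, ((⟪y, z⟫ : ℝ) : EReal)

/-- Extended-real-valued dual objective (value in `ℝ ∪ {±∞}`; it is `-∞` when a support
function is `+∞`). -/
def DvalE (mbar : ℕ) (g : Evec n) (a : Fin m → Evec n) (b : Fin m → ℝ)
    (Hf H0 : Matrix (Fin n) (Fin n) ℝ) (X : Set (Evec n)) (ρ : ℝ)
    (u0 : Evec n) (u : Fin m → Evec n) (um1 : Evec n) : EReal :=
  ((-(1/2) * ⟪u0 - ρ • g, matApply (Hmat Hf H0 ρ)⁻¹ (u0 - ρ • g)⟫ : ℝ) : EReal)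
    - ∑ i, (‖a i‖ : EReal) * suppFnE (u i) (Cset mbar a b i)
    - suppFnE um1 X

/-- `ζᵢ(u) := ⟨uⁱ, āⁱ⟩`. -/
def zeta (a : Fin m → Evec n) (u : Fin m → Evec n) (i : Fin m) : ℝ := ⟪u i, abar a i⟫

/-- The complementarity measure
`χ(d,u) = Σ_{i ∈ E₊(d) ∪ I₊(d)} (1−ζᵢ(u))‖aⁱ‖ dist(d,Cᵢ) + Σ_{i ∈ E₋(d)} (1+ζᵢ(u))‖aⁱ‖ dist(d,Cᵢ)`. -/
def chiMeas (mbar : ℕ) (a : Fin m → Evec n) (b : Fin m → ℝ)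
    (d : Evec n) (u : Fin m → Evec n) : ℝ :=
  ∑ i : Fin m,
    if (i : ℕ) < mbar then
      (if 0 < ⟪abar a i, d⟫ + bbar a b i then
          (1 - zeta a u i) * (‖a i‖ * Metric.infDist d (Cset mbar a b i))
        else if ⟪abar a i, d⟫ + bbar a b i < 0 then
          (1 + zeta a u i) * (‖a i‖ * Metric.infDist d (Cset mbar a b i))
        else 0)
    else
      (if 0 < ⟪abar a i, d⟫ + bbar a b i then
          (1 - zeta a u i) * (‖a i‖ * Metric.infDist d (Cset mbar a b i))
        else 0)



section InnerProductSpace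

variable {E : Type*} [NormedAddCommGroup E] [InnerProductSpace ℝ E]

theorem LinearMap.IsPositive.neg_half_inner_le {T : E →ₗ[ℝ] E} (hT : T.IsPositive) {v w : E}
    (hv : T v = w) (d : E) : -(1/2) * ⟪w, v⟫ ≤ (1/2) * ⟪d, T d⟫ - ⟪w, d⟫ := by
  have hsq := hT.inner_nonneg_right (d - v)
  have hsymm : ⟪v, T d⟫ = ⟪w, d⟫ := by rw [← hT.isSymmetric v d, hv]
  rw [map_sub, hv, inner_sub_left, inner_sub_right, inner_sub_right, hsymm,
    real_inner_comm d w] at hsq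
  linarith [real_inner_comm v w, real_inner_comm d w]

theorem Metric.infDist_eq_abs_of_sub_smul_mem {e d : E} (he : ‖e‖ = 1) {C : Set E} {t : ℝ}
    (hmem : d - t • e ∈ C) (hle : ∀ y ∈ C, |t| ≤ |⟪e, d - y⟫|) :
    Metric.infDist d C = |t| := by
  refine le_antisymm ?_ ((Metric.le_infDist ⟨_, hmem⟩).2 fun y hy => ?_)
  · calc Metric.infDist d C ≤ dist d (d - t • e) := Metric.infDist_le_dist_of_mem hmem
      _ = |t| := by rw [dist_eq_norm, sub_sub_cancel, norm_smul, he, mul_one, Real.norm_eq_abs]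
  · calc |t| ≤ |⟪e, d - y⟫| := hle y hy
      _ ≤ ‖e‖ * ‖d - y‖ := abs_real_inner_le_norm e (d - y)
      _ = dist d y := by rw [he, one_mul, dist_eq_norm]

end InnerProductSpace

theorem EReal.coe_finset_sum {ι : Type*} (s : Finset ι) (f : ι → ℝ) :
    ((∑ i ∈ s, f i : ℝ) : EReal) = ∑ i ∈ s, (f i : EReal) :=
  map_sum (⟨⟨Real.toEReal, EReal.coe_zero⟩, EReal.coe_add⟩ : ℝ →+ EReal) f s

theorem le_suppFnE {n : ℕ} (y : Evec n) {C : Set (Evec n)} {z : Evec n} (hz : z ∈ C) :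
    ((⟪y, z⟫ : ℝ) : EReal) ≤ suppFnE y C :=
  le_iSup₂ (f := fun w (_ : w ∈ C) => ((⟪y, w⟫ : ℝ) : EReal)) z hz

theorem Matrix.PosDef.isPositive_toEuclideanLin {n : ℕ} {M : Matrix (Fin n) (Fin n) ℝ}
    (hM : M.PosDef) : (Matrix.toEuclideanLin M).IsPositive :=
  Matrix.isPositive_toEuclideanLin_iff.2 hM.posSemidef

theorem matApply_matApply_inv {n : ℕ} {M : Matrix (Fin n) (Fin n) ℝ} (hM : M.PosDef)
    (x : Evec n) : matApply M (matApply M⁻¹ x) = x := by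
  simp only [matApply, Matrix.toLpLin_apply, Matrix.mulVec_mulVec,
    Matrix.mul_nonsing_inv _ (isUnit_iff_ne_zero.2 hM.det_pos.ne'), Matrix.one_mulVec]

namespace QP

variable {n m : ℕ} (mbar : ℕ) (a : Fin m → Evec n) (b : Fin m → ℝ) (d : Evec n)

def residual (i : Fin m) : ℝ := ⟪abar a i, d⟫ + bbar a b i

/-- `d - tᵢ āⁱ` is the projection of `d` onto `Cᵢ`. -/
def violation (i : Fin m) : ℝ :=
  if (i : ℕ) < mbar then residual a b d i else max (residual a b d i) 0

variable {a}

theorem norm_abar {i : Fin m} (ha : a i ≠ 0) : ‖abar a i‖ = 1 := by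
  rw [abar, norm_smul, norm_inv, norm_norm, inv_mul_cancel₀ (norm_ne_zero_iff.2 ha)]

theorem inner_add_eq_norm_mul_residual {i : Fin m} (ha : a i ≠ 0) :
    ⟪a i, d⟫ + b i = ‖a i‖ * residual a b d i := by
  have := norm_ne_zero_iff.2 ha
  rw [residual, abar, bbar, real_inner_smul_left]
  field_simp

theorem residual_sub_smul_abar {i : Fin m} (ha : a i ≠ 0) (t : ℝ) :
    residual a b (d - t • abar a i) i = residual a b d i - t := by
  rw [residual, residual, inner_sub_right, real_inner_smul_right, real_inner_self_eq_norm_sq,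
    norm_abar ha]
  ring

theorem sub_violation_smul_mem_Cset {i : Fin m} (ha : a i ≠ 0) :
    d - violation mbar a b d i • abar a i ∈ Cset mbar a b i := by
  rw [Cset]
  split_ifs with hi
  · change residual a b _ i = 0
    rw [residual_sub_smul_abar b d ha, violation, if_pos hi, sub_self]
  · change residual a b _ i ≤ 0
    rw [residual_sub_smul_abar b d ha, violation, if_neg hi]
    linarith [le_max_left (residual a b d i) 0]

theorem infDist_Cset {i : Fin m} (ha : a i ≠ 0) :
    Metric.infDist d (Cset mbar a b i) = |violation mbar a b d i| := by
  refine Metric.infDist_eq_abs_of_sub_smul_mem (norm_abar ha)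
    (sub_violation_smul_mem_Cset mbar b d ha) fun y hy => ?_
  have hres : ⟪abar a i, d - y⟫ = residual a b d i - residual a b y i := by
    rw [residual, residual, inner_sub_right]; ring
  unfold Cset at hy
  unfold violation
  split_ifs at hy ⊢ with hi
  · rw [hres, show residual a b y i = 0 from hy, sub_zero]
  · have hy : residual a b y i ≤ 0 := hy
    rw [hres, abs_of_nonneg (le_max_right _ _)]
    exact max_le (by linarith [le_abs_self (residual a b d i - residual a b y i)]) (abs_nonneg _)

theorem lpen_eq_sum_violation (ha : ∀ i, a i ≠ 0) :
    lpen mbar a b d = ∑ i, ‖a i‖ * |violation mbar a b d i| := by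
  refine Finset.sum_congr rfl fun i _ => ?_
  rw [inner_add_eq_norm_mul_residual b d (ha i), violation]
  split_ifs
  · rw [abs_mul, abs_norm]
  · rw [abs_of_nonneg (le_max_right _ _), mul_max_of_nonneg _ _ (norm_nonneg _), mul_zero]

theorem chiMeas_eq_sum_violation (ha : ∀ i, a i ≠ 0) (u : Fin m → Evec n) :
    chiMeas mbar a b d u
      = ∑ i, ‖a i‖ * (|violation mbar a b d i| - zeta a u i * violation mbar a b d i) := by
  refine Finset.sum_congr rfl fun i _ => ?_
  have hr : ⟪abar a i, d⟫ + bbar a b i = residual a b d i := rfl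
  rw [hr, infDist_Cset mbar b d (ha i), violation]
  split_ifs with hi hpos hneg hpos'
  · rw [abs_of_pos hpos]; ring
  · rw [abs_of_neg hneg]; ring
  · rw [le_antisymm (not_lt.1 hpos) (not_lt.1 hneg)]; simp
  · rw [max_eq_left hpos'.le, abs_of_pos hpos']; ring
  · rw [max_eq_right (not_lt.1 hpos')]; simp

variable {mbar b d}

theorem abs_zeta_le_one {u : Fin m → Evec n} {i : Fin m} (ha : a i ≠ 0) (hu : ‖u i‖ ≤ 1) :
    |zeta a u i| ≤ 1 :=
  calc |zeta a u i| ≤ ‖u i‖ * ‖abar a i‖ := abs_real_inner_le_norm _ _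
    _ ≤ 1 := by rwa [norm_abar ha, mul_one]

theorem chiMeas_nonneg (ha : ∀ i, a i ≠ 0) {u : Fin m → Evec n}
    (hu : ∀ i, ‖u i‖ ≤ 1) : 0 ≤ chiMeas mbar a b d u := by
  rw [chiMeas_eq_sum_violation mbar b d ha]
  refine Finset.sum_nonneg fun i _ => mul_nonneg (norm_nonneg _) (sub_nonneg.2 ?_)
  set t := violation mbar a b d i
  calc zeta a u i * t ≤ |zeta a u i| * |t| := by rw [← abs_mul]; exact le_abs_self _
    _ ≤ 1 * |t| := by gcongr; exact abs_zeta_le_one (ha i) (hu i)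
    _ = |t| := one_mul _

variable {g : Evec n} {Hf H0 : Matrix (Fin n) (Fin n) ℝ} {X : Set (Evec n)} {ρ : ℝ}
  {u0 : Evec n} {u : Fin m → Evec n} {um1 : Evec n}

theorem DvalE_le_of_mem (ha : ∀ i, a i ≠ 0) (hd : d ∈ X) :
    DvalE mbar g a b Hf H0 X ρ u0 u um1
      ≤ ((-(1/2) * ⟪u0 - ρ • g, matApply (Hmat Hf H0 ρ)⁻¹ (u0 - ρ • g)⟫
          - ∑ i, ‖a i‖ * ⟪u i, d - violation mbar a b d i • abar a i⟫ - ⟪um1, d⟫ : ℝ) : EReal) := by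
  have hsum : ((∑ i, ‖a i‖ * ⟪u i, d - violation mbar a b d i • abar a i⟫ : ℝ) : EReal)
      ≤ ∑ i, (‖a i‖ : EReal) * suppFnE (u i) (Cset mbar a b i) := by
    rw [EReal.coe_finset_sum]
    refine Finset.sum_le_sum fun i _ => ?_
    rw [EReal.coe_mul]
    exact mul_le_mul_of_nonneg_left (le_suppFnE _ (sub_violation_smul_mem_Cset mbar b d (ha i)))
      (EReal.coe_nonneg.2 (norm_nonneg _))
  rw [DvalE, EReal.coe_sub, EReal.coe_sub]
  exact EReal.sub_le_sub (EReal.sub_le_sub le_rfl hsum) (le_suppFnE um1 hd)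

theorem DvalE_le_Jval_sub_chiMeas (ha : ∀ i, a i ≠ 0) (hH : (Hmat Hf H0 ρ).PosDef)
    (hu : DualFeasible a u0 u um1) (hd : d ∈ X) :
    DvalE mbar g a b Hf H0 X ρ u0 u um1
      ≤ ((Jval mbar g a b Hf H0 ρ d - chiMeas mbar a b d u : ℝ) : EReal) := by
  refine (DvalE_le_of_mem ha hd).trans (EReal.coe_le_coe_iff.2 ?_)
  set t := violation mbar a b d
  have hquad : -(1/2) * ⟪u0 - ρ • g, matApply (Hmat Hf H0 ρ)⁻¹ (u0 - ρ • g)⟫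
      ≤ (1/2) * ⟪d, matApply (Hmat Hf H0 ρ) d⟫ - ⟪u0 - ρ • g, d⟫ :=
    hH.isPositive_toEuclideanLin.neg_half_inner_le (matApply_matApply_inv hH (u0 - ρ • g)) d
  have hgd : ⟪u0 - ρ • g, d⟫ = ⟪u0, d⟫ - ρ * ⟪g, d⟫ := by
    rw [inner_sub_left, real_inner_smul_left]
  have hfeas : ⟪u0, d⟫ + ∑ i, ‖a i‖ * ⟪u i, d⟫ + ⟪um1, d⟫ = 0 := by
    simpa [inner_add_left, sum_inner, real_inner_smul_left] using
      congrArg (fun v : Evec n => ⟪v, d⟫) hu.1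
  have hproj : ∑ i, ‖a i‖ * ⟪u i, d - t i • abar a i⟫
      = ∑ i, ‖a i‖ * ⟪u i, d⟫ + ∑ i, ‖a i‖ * (|t i| - zeta a u i * t i)
        - ∑ i, ‖a i‖ * |t i| := by
    rw [← Finset.sum_add_distrib, ← Finset.sum_sub_distrib]
    refine Finset.sum_congr rfl fun i _ => ?_
    rw [inner_sub_right, real_inner_smul_right, zeta]
    ring
  rw [Jval, lpen_eq_sum_violation mbar b d ha, chiMeas_eq_sum_violation mbar b d ha, hproj]
  linarith

end QP

theorem statement_6_general
    (n m mbar : ℕ)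
    (g : Evec n) (a : Fin m → Evec n) (ha : ∀ i, a i ≠ 0) (b : Fin m → ℝ)
    (Hf H0 : Matrix (Fin n) (Fin n) ℝ)
    (ρ₀ : ℝ)
    (hpos : ∀ ρ ∈ Set.Icc (0:ℝ) ρ₀, (Hmat Hf H0 ρ).PosDef)
    (X : Set (Evec n))
    (ρ : ℝ) (hρ : ρ ∈ Set.Icc (0:ℝ) ρ₀)
    (dstar : Evec n) (hdX : dstar ∈ X)
    (u0 : Evec n) (u : Fin m → Evec n) (um1 : Evec n)
    (hu : DualFeasible a u0 u um1)
    (hstrong : DvalE mbar g a b Hf H0 X ρ u0 u um1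
        = ((Jval mbar g a b Hf H0 ρ dstar : ℝ) : EReal)) :
    chiMeas mbar a b dstar u = 0 := by
  have hgap :=
    QP.DvalE_le_Jval_sub_chiMeas (mbar := mbar) (g := g) (b := b) ha (hpos ρ hρ) hu hdX
  rw [hstrong, EReal.coe_le_coe_iff] at hgap
  linarith [QP.chiMeas_nonneg (mbar := mbar) (b := b) (d := dstar) ha hu.2]

/-- Let `ρ ∈ [0,ρ₀]`, let `d* ∈ X` be a minimizer of `J(·,ρ)` over `X`, and let
`u*` be a dual-feasible point with `D(u*,ρ) = J(d*,ρ)` (strong duality).  Then the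
complementarity measure vanishes: `χ(d*,u*) = 0`. -/
theorem statement_6
    (n m mbar : ℕ) (hn : 1 ≤ n) (hmm : mbar ≤ m)
    (g : Evec n) (a : Fin m → Evec n) (ha : ∀ i, a i ≠ 0) (b : Fin m → ℝ)
    (Hf H0 : Matrix (Fin n) (Fin n) ℝ) (hHf : Hf.IsHermitian) (hH0 : H0.IsHermitian)
    (ρ₀ : ℝ) (hρ₀ : 0 < ρ₀)
    (hpos : ∀ ρ ∈ Set.Icc (0:ℝ) ρ₀, (Hmat Hf H0 ρ).PosDef)
    (X : Set (Evec n)) (hXne : X.Nonempty) (hXcp : IsCompact X)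
    (hXcv : Convex ℝ X) (hX0 : (0 : Evec n) ∈ X)
    (ρ : ℝ) (hρ : ρ ∈ Set.Icc (0:ℝ) ρ₀)
    (dstar : Evec n) (hdX : dstar ∈ X)
    (hmin : ∀ d ∈ X, Jval mbar g a b Hf H0 ρ dstar ≤ Jval mbar g a b Hf H0 ρ d)
    (u0 : Evec n) (u : Fin m → Evec n) (um1 : Evec n)
    (hu : DualFeasible a u0 u um1)
    (hstrong : DvalE mbar g a b Hf H0 X ρ u0 u um1
        = ((Jval mbar g a b Hf H0 ρ dstar : ℝ) : EReal)) :
    chiMeas mbar a b dstar u = 0 :=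
  statement_6_general n m mbar g a ha b Hf H0 ρ₀ hpos X ρ hρ dstar hdX u0 u um1 hu hstrong
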